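/- arXiv:1812.09965 — 3 statements merged into one kernel-verified Lean document; each statement's English description precedes it below -/
import Mathlib

section
/- Let E be a real Banach space, U ⊆ E open, X : U → E a C¹ Lipschitz vector field, and 𝔽 : (−α, α) × U₀ → U a local flow of X (i.e., 𝔽(0,x) = x and ∂ₜ𝔽(t,x) = X(𝔽(t,x))). Then for each x ∈ U₀ and t ∈ (−α, α), the partial Fréchet derivative D_x𝔽(t,x) ∈ L(E,E) exists, and the curve A(t) := D_x𝔽(t,x) is the unique solution of the linear variational equation A'(t) = DX(𝔽(t,x)) ∘ A(t) with initial condition A(0) = id_E, where DX(y) ∈ L(E,E) denotes the Fréchet derivative of X at y and the derivative A'(t) is taken in the Banach space L(E,E) of continuous linear endomorphisms with the operator norm. -/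
/-!
On every `[-c, c] ⊂ (-α, α)` the variational equation `W' = DX(𝔽(t,x)) ∘ W`, `W 0 = 1`, is
solved by Picard iteration: the equation is linear, so some iterate of the Picard operator is a
contraction on the whole interval. For `y` near `x` the error
`θ s = 𝔽(s,y) - 𝔽(s,x) - W s (y - x)` satisfies `θ' = DX(𝔽(s,x)) θ + r s`, where `r s` is the
first-order Taylor remainder of `X` at `𝔽(s,x)`. Since `‖𝔽(s,y) - 𝔽(s,x)‖ ≤ e^{βs} ‖y - x‖` and
`X` is uniformly differentiable along the compact trajectory, `r = o(‖y - x‖)` uniformly in `s`,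
and Grönwall's inequality gives `θ t = o(‖y - x‖)`, i.e. `W t = D_x𝔽(t,x)`; negative times follow
by reversing time. Taking `A t := D_x𝔽(t,x)` itself as the solution on `(-α, α)` spares gluing the
solutions found on the various `[-c, c]`. Uniqueness holds because `‖DX‖ ≤ β` makes the
variational equation `β`-Lipschitz in `W`.
-/

open Set Metric Function Filter Real MeasureTheory
open scoped Nat NNReal Topology

section LinearODE

variable {F : Type*} [NormedAddCommGroup F] [NormedSpace ℝ F] {L : ℝ → F →L[ℝ] F}
  {a b t₀ K : ℝ}

theorem ContinuousOn.continuous_apply_projIcc (hab : a ≤ b) (hL : ContinuousOn L (Icc a b))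
    (u : C(Icc a b, F)) : Continuous fun s => L (projIcc a b hab s) (u (projIcc a b hab s)) :=
  (hL.comp_continuous (continuous_subtype_val.comp continuous_projIcc) fun s =>
    (projIcc a b hab s).2).clm_apply (u.continuous.comp continuous_projIcc)

noncomputable def linearPicard (hab : a ≤ b) (hL : ContinuousOn L (Icc a b)) (t₀ : ℝ) (x₀ : F)
    (u : C(Icc a b, F)) : C(Icc a b, F) where
  toFun t := x₀ + ∫ s in t₀..t, L (projIcc a b hab s) (u (projIcc a b hab s))
  continuous_toFun := continuous_const.add <| (intervalIntegral.continuous_primitive (fun _ _ =>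
    (hL.continuous_apply_projIcc hab u).intervalIntegrable _ _) t₀).comp continuous_subtype_val

theorem linearPicard_apply (hab : a ≤ b) (hL : ContinuousOn L (Icc a b)) (x₀ : F)
    (u : C(Icc a b, F)) (t : Icc a b) :
    linearPicard hab hL t₀ x₀ u t =
      x₀ + ∫ s in t₀..t, L (projIcc a b hab s) (u (projIcc a b hab s)) :=
  rfl

theorem dist_linearPicard_iterate_le (hab : a ≤ b) (hL : ContinuousOn L (Icc a b))
    (hK : ∀ t ∈ Icc a b, ‖L t‖ ≤ K) (ht₀ : t₀ ∈ Icc a b) (x₀ : F) (n : ℕ)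
    (u v : C(Icc a b, F)) (t : Icc a b) :
    dist ((linearPicard hab hL t₀ x₀)^[n] u t) ((linearPicard hab hL t₀ x₀)^[n] v t) ≤
      (K * |t - t₀|) ^ n / n ! * dist u v := by
  induction n generalizing t with
  | zero => simpa using ContinuousMap.dist_apply_le_dist t
  | succ n ih =>
    set P := linearPicard hab hL t₀ x₀
    have hP : ∀ w : C(Icc a b, F), Continuous fun s =>
        L (projIcc a b hab s) ((P^[n] w) (projIcc a b hab s)) :=
      fun w => hL.continuous_apply_projIcc hab _
    have hpt : ∀ s ∈ uIoc t₀ t, ‖L (projIcc a b hab s) ((P^[n] u) (projIcc a b hab s)) -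
        L (projIcc a b hab s) ((P^[n] v) (projIcc a b hab s))‖ ≤
          K ^ (n + 1) / n ! * dist u v * |s - t₀| ^ n := by
      intro s hs
      have hsI : s ∈ Icc a b := uIcc_subset_Icc ht₀ t.2 (uIoc_subset_uIcc hs)
      rw [projIcc_of_mem hab hsI, ← map_sub]
      calc _ ≤ K * ‖(P^[n] u) ⟨s, hsI⟩ - (P^[n] v) ⟨s, hsI⟩‖ :=
            (L s).le_of_opNorm_le (hK s hsI) _
        _ ≤ K * ((K * |s - t₀|) ^ n / n ! * dist u v) := by
            rw [← dist_eq_norm]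
            exact mul_le_mul_of_nonneg_left (ih _) ((norm_nonneg _).trans (hK s hsI))
        _ = _ := by ring
    rw [iterate_succ_apply', iterate_succ_apply', dist_eq_norm, linearPicard_apply,
      linearPicard_apply, add_sub_add_left_eq_sub,
      ← intervalIntegral.integral_sub ((hP u).intervalIntegrable _ _)
        ((hP v).intervalIntegrable _ _),
      intervalIntegral.norm_intervalIntegral_eq]
    refine (norm_integral_le_of_norm_le (Continuous.integrableOn_uIoc (by fun_prop))
      ((ae_restrict_mem measurableSet_uIoc).mono hpt)).trans (le_of_eq ?_)
    rw [integral_const_mul, integral_pow_abs_sub_uIoc, Nat.factorial_succ]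
    push_cast
    field_simp
    ring

theorem exists_forall_Icc_hasDerivAt_linear [CompleteSpace F] (hL : ContinuousOn L (Icc a b))
    (ht₀ : t₀ ∈ Icc a b) (x₀ : F) :
    ∃ u : ℝ → F, u t₀ = x₀ ∧ ∀ t ∈ Icc a b, HasDerivAt u (L t (u t)) t := by
  have hab : a ≤ b := ht₀.1.trans ht₀.2
  obtain ⟨K, hK⟩ := isCompact_Icc.exists_bound_of_continuousOn hL
  have hK0 : 0 ≤ K := (norm_nonneg _).trans (hK t₀ ht₀)
  have hba : 0 ≤ b - a := sub_nonneg.2 hab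
  set P := linearPicard hab hL t₀ x₀
  obtain ⟨n, hn⟩ := ((FloorSemiring.tendsto_pow_div_factorial_atTop (K * (b - a))).eventually
    (gt_mem_nhds zero_lt_one)).exists
  have hcontr : ContractingWith ⟨(K * (b - a)) ^ n / n !, by positivity⟩
      P^[n] := by
    refine ⟨hn, LipschitzWith.of_dist_le_mul fun u v => ?_⟩
    refine (ContinuousMap.dist_le (mul_nonneg (NNReal.coe_nonneg _) dist_nonneg)).2 fun t => ?_
    refine (dist_linearPicard_iterate_le hab hL hK ht₀ x₀ n u v t).trans ?_
    show _ ≤ (K * (b - a)) ^ n / n ! * dist u v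
    gcongr
    exact abs_sub_le_of_le_of_le t.2.1 t.2.2 ht₀.1 ht₀.2
  set w := ContractingWith.fixedPoint _ hcontr
  have hw : P w = w := hcontr.isFixedPt_fixedPoint_iterate
  refine ⟨fun t => x₀ + ∫ s in t₀..t, L (projIcc a b hab s) (w (projIcc a b hab s)), by simp,
    fun t ht => ?_⟩
  have hwt : w ⟨t, ht⟩ = x₀ + ∫ s in t₀..t, L (projIcc a b hab s) (w (projIcc a b hab s)) := by
    calc w ⟨t, ht⟩ = P w ⟨t, ht⟩ := by rw [hw]
      _ = _ := linearPicard_apply hab hL x₀ w ⟨t, ht⟩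
  have := ((hL.continuous_apply_projIcc hab w).integral_hasStrictDerivAt t₀ t).hasDerivAt.const_add
    x₀
  rwa [projIcc_of_mem hab ht, hwt] at this

end LinearODE

theorem IsCompact.exists_forall_norm_sub_sub_le_mul {E F : Type*} [NormedAddCommGroup E]
    [NormedSpace ℝ E] [NormedAddCommGroup F] [NormedSpace ℝ F] {f : E → F} {f' : E → E →L[ℝ] F}
    {K U : Set E} (hK : IsCompact K) (hU : IsOpen U) (hKU : K ⊆ U)
    (hf : ∀ y ∈ U, HasFDerivAt f (f' y) y) (hf' : ContinuousOn f' U) {ε : ℝ} (hε : 0 < ε) :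
    ∃ ρ > 0, ∀ z ∈ K, ∀ w ∈ ball z ρ, ‖f w - f z - f' z (w - z)‖ ≤ ε * ‖w - z‖ := by
  obtain ⟨δ₁, hδ₁, hKδ₁⟩ := hK.exists_thickening_subset_open hU hKU
  obtain ⟨δ₂, hδ₂, hδ₂f'⟩ := mem_uniformity_dist.1 <| hK.uniformContinuousAt_of_continuousAt f'
    (fun z hz => hf'.continuousAt (hU.mem_nhds (hKU hz))) (dist_mem_uniformity hε)
  refine ⟨min δ₁ δ₂, lt_min hδ₁ hδ₂, fun z hz w hw => ?_⟩
  have hball : ball z (min δ₁ δ₂) ⊆ U :=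
    (ball_subset_ball (min_le_left _ _)).trans ((ball_subset_thickening hz _).trans hKδ₁)
  have hf'_near : ∀ ξ ∈ ball z (min δ₁ δ₂), ‖f' ξ - f' z‖ ≤ ε := by
    intro ξ hξ
    have : dist z ξ < δ₂ := (mem_ball'.1 hξ).trans_le (min_le_right _ _)
    rw [← dist_eq_norm, dist_comm]
    exact (hδ₂f' this hz).le
  have := (convex_ball z _).norm_image_sub_le_of_norm_hasFDerivWithin_le
    (fun ξ hξ => ((hf ξ (hball hξ)).sub (f' z).hasFDerivAt).hasFDerivWithinAt) hf'_near
    (mem_ball_self (lt_min hδ₁ hδ₂)) hw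
  simpa only [Pi.sub_apply, sub_sub_sub_comm, map_sub] using this

theorem gronwallBound_zero_eq_mul (K ε x : ℝ) :
    gronwallBound 0 K ε x = ε * gronwallBound 0 K 1 x := by
  rcases eq_or_ne K 0 with rfl | hK
  · simp [gronwallBound_K0]
  · simp only [gronwallBound_of_K_ne_0 hK]; ring

theorem ContinuousLinearMap.lipschitzWith_comp_left {E F G : Type*} [NormedAddCommGroup E]
    [NormedSpace ℝ E] [NormedAddCommGroup F] [NormedSpace ℝ F] [NormedAddCommGroup G]
    [NormedSpace ℝ G] (L : F →L[ℝ] G) {β : ℝ≥0} (hL : ‖L‖ ≤ β) :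
    LipschitzWith β fun M : E →L[ℝ] F => L.comp M :=
  LipschitzWith.of_dist_le_mul fun M M' => by
    simpa only [dist_eq_norm, ← ContinuousLinearMap.comp_sub] using
      (L.opNorm_comp_le _).trans (by gcongr)

section Flow

variable {E : Type*} [NormedAddCommGroup E] [NormedSpace ℝ E]

theorem norm_sub_sub_apply_sub_le_gronwallBound {X : E → E} {DX : E → E →L[ℝ] E} {β : ℝ≥0}
    {δ T : ℝ} (hT : 0 ≤ T) {u v : ℝ → E} {W : ℝ → E →L[ℝ] E}
    (hu : ∀ s ∈ Icc 0 T, HasDerivAt u (X (u s)) s) (hv : ∀ s ∈ Icc 0 T, HasDerivAt v (X (v s)) s)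
    (hW0 : W 0 = 1) (hW : ∀ s ∈ Icc 0 T, HasDerivAt W ((DX (v s)).comp (W s)) s)
    (hDX : ∀ s ∈ Icc 0 T, ‖DX (v s)‖ ≤ β)
    (hrem : ∀ s ∈ Icc 0 T, ‖X (u s) - X (v s) - DX (v s) (u s - v s)‖ ≤ δ) :
    ‖u T - v T - W T (u 0 - v 0)‖ ≤ gronwallBound 0 β δ T := by
  have hWh : ∀ s ∈ Icc 0 T,
      HasDerivAt (fun s => W s (u 0 - v 0)) (DX (v s) (W s (u 0 - v 0))) s := fun s hs => by
    simpa using (hW s hs).clm_apply (hasDerivAt_const s (u 0 - v 0))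
  -- `u - v` solves the variational equation along `v` up to the error `δ`
  have := dist_le_of_approx_trajectories_ODE_of_mem (v := fun s => DX (v s)) (K := β)
    (s := fun _ => univ) (εf := δ) (εg := 0) (δ := 0)
    (fun s hs => (DX (v s)).lipschitz.weaken (hDX s (Ico_subset_Icc_self hs)) |>.lipschitzOnWith)
    (HasDerivAt.continuousOn fun s hs => (hu s hs).sub (hv s hs))
    (fun s hs =>
      ((hu s (Ico_subset_Icc_self hs)).sub (hv s (Ico_subset_Icc_self hs))).hasDerivWithinAt)
    (fun s hs => by simpa only [dist_eq_norm, Pi.sub_apply] using hrem s (Ico_subset_Icc_self hs))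
    (fun _ _ => mem_univ _)
    (HasDerivAt.continuousOn hWh) (fun s hs => (hWh s (Ico_subset_Icc_self hs)).hasDerivWithinAt)
    (fun _ _ => (dist_self _).le) (fun _ _ => mem_univ _) (by simp [hW0]) T ⟨hT, le_rfl⟩
  simpa [dist_eq_norm] using this

theorem hasFDerivAt_flow_of_variational {U U₀ : Set E} (hU : IsOpen U) {X : E → E}
    {β : ℝ≥0} (hLip : LipschitzOnWith β X U) {DX : E → E →L[ℝ] E}
    (hDX : ∀ y ∈ U, HasFDerivAt X (DX y) y) (hDXcont : ContinuousOn DX U) {𝔽 : ℝ → E → E}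
    {T : ℝ} (hT : 0 ≤ T) {x : E} (hU₀ : U₀ ∈ 𝓝 x) (hmem : ∀ y ∈ U₀, ∀ s ∈ Icc 0 T, 𝔽 s y ∈ U)
    (h0 : ∀ y ∈ U₀, 𝔽 0 y = y)
    (hflow : ∀ y ∈ U₀, ∀ s ∈ Icc 0 T, HasDerivAt (fun s => 𝔽 s y) (X (𝔽 s y)) s)
    {W : ℝ → E →L[ℝ] E} (hW0 : W 0 = 1)
    (hW : ∀ s ∈ Icc 0 T, HasDerivAt W ((DX (𝔽 s x)).comp (W s)) s) :
    HasFDerivAt (𝔽 T) (W T) x := by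
  have hx : x ∈ U₀ := mem_of_mem_nhds hU₀
  have hβ : ∀ y ∈ U, ‖DX y‖ ≤ β := fun y hy => (hDX y hy).le_of_lipschitzOn (hU.mem_nhds hy) hLip
  have hdist : ∀ y ∈ U₀, ∀ s ∈ Icc 0 T, ‖𝔽 s y - 𝔽 s x‖ ≤ exp (β * T) * ‖y - x‖ := by
    intro y hy s hs
    have := dist_le_of_trajectories_ODE_of_mem (v := fun _ => X) (s := fun _ => U)
      (fun _ _ => hLip) (HasDerivAt.continuousOn fun s hs => hflow y hy s hs)
      (fun s hs => (hflow y hy s (Ico_subset_Icc_self hs)).hasDerivWithinAt)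
      (fun s hs => hmem y hy s (Ico_subset_Icc_self hs))
      (HasDerivAt.continuousOn fun s hs => hflow x hx s hs)
      (fun s hs => (hflow x hx s (Ico_subset_Icc_self hs)).hasDerivWithinAt)
      (fun s hs => hmem x hx s (Ico_subset_Icc_self hs)) (by rw [h0 y hy, h0 x hx]) s hs
    rw [dist_eq_norm, dist_eq_norm, sub_zero, mul_comm] at this
    exact this.trans (by gcongr; exact hs.2)
  have hΓ : IsCompact ((fun s => 𝔽 s x) '' Icc 0 T) :=
    isCompact_Icc.image_of_continuousOn (HasDerivAt.continuousOn fun s hs => hflow x hx s hs)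
  have hΓU : (fun s => 𝔽 s x) '' Icc 0 T ⊆ U := by
    rintro - ⟨s, hs, rfl⟩; exact hmem x hx s hs
  rw [hasFDerivAt_iff_isLittleO, Asymptotics.isLittleO_iff]
  intro c hc
  set C := exp (β * T) * gronwallBound 0 β 1 T
  have hC : 0 ≤ C := mul_nonneg (exp_pos _).le <| by
    simpa [gronwallBound_x0] using gronwallBound_mono le_rfl zero_le_one β.2 hT
  obtain ⟨ρ, hρ, hrem⟩ := hΓ.exists_forall_norm_sub_sub_le_mul hU hΓU hDX hDXcont
    (ε := c / (C + 1)) (by positivity)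
  filter_upwards [hU₀, ball_mem_nhds x (div_pos hρ (exp_pos (β * T)))] with y hy hyx
  rw [mem_ball, dist_eq_norm, lt_div_iff₀ (exp_pos _), mul_comm] at hyx
  have := norm_sub_sub_apply_sub_le_gronwallBound (u := fun s => 𝔽 s y) (v := fun s => 𝔽 s x)
    (δ := c / (C + 1) * (exp (β * T) * ‖y - x‖)) hT (hflow y hy) (hflow x hx) hW0 hW
    (fun s hs => hβ _ (hmem x hx s hs)) fun s hs =>
      (hrem _ ⟨s, hs, rfl⟩ _ (mem_ball_iff_norm.2 ((hdist y hy s hs).trans_lt hyx))).trans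
        (by gcongr; exact hdist y hy s hs)
  rw [h0 y hy, h0 x hx, gronwallBound_zero_eq_mul] at this
  calc _ ≤ C / (C + 1) * c * ‖y - x‖ := this.trans_eq (by ring)
    _ ≤ c * ‖y - x‖ := by
        gcongr
        exact mul_le_of_le_one_left hc.le ((div_le_one (by positivity)).2 (by linarith))

theorem hasFDerivAt_flow_of_variational_of_nonpos {U U₀ : Set E} (hU : IsOpen U)
    {X : E → E} {β : ℝ≥0} (hLip : LipschitzOnWith β X U) {DX : E → E →L[ℝ] E}
    (hDX : ∀ y ∈ U, HasFDerivAt X (DX y) y) (hDXcont : ContinuousOn DX U) {𝔽 : ℝ → E → E}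
    {T : ℝ} (hT : T ≤ 0) {x : E} (hU₀ : U₀ ∈ 𝓝 x) (hmem : ∀ y ∈ U₀, ∀ s ∈ Icc T 0, 𝔽 s y ∈ U)
    (h0 : ∀ y ∈ U₀, 𝔽 0 y = y)
    (hflow : ∀ y ∈ U₀, ∀ s ∈ Icc T 0, HasDerivAt (fun s => 𝔽 s y) (X (𝔽 s y)) s)
    {W : ℝ → E →L[ℝ] E} (hW0 : W 0 = 1)
    (hW : ∀ s ∈ Icc T 0, HasDerivAt W ((DX (𝔽 s x)).comp (W s)) s) :
    HasFDerivAt (𝔽 T) (W T) x := by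
  have hneg : ∀ s ∈ Icc 0 (-T), -s ∈ Icc T 0 := fun s hs =>
    ⟨by linarith [hs.2], by linarith [hs.1]⟩
  have := hasFDerivAt_flow_of_variational hU hLip.neg (DX := -DX)
    (fun y hy => (hDX y hy).neg) hDXcont.neg (𝔽 := fun s => 𝔽 (-s)) (W := fun s => W (-s))
    (neg_nonneg.2 hT) hU₀ (fun y hy s hs => hmem y hy _ (hneg s hs))
    (fun y hy => by simpa using h0 y hy)
    (fun y hy s hs => by
      simpa [comp_def] using (hflow y hy _ (hneg s hs)).scomp s (hasDerivAt_neg s))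
    (by simpa using hW0)
    (fun s hs => by simpa [comp_def] using (hW _ (hneg s hs)).scomp s (hasDerivAt_neg s))
  simpa using this

variable [CompleteSpace E] {U U₀ : Set E} {X : E → E} {β : ℝ≥0} {DX : E → E →L[ℝ] E}
  {α : ℝ} {𝔽 : ℝ → E → E}

theorem exists_forall_Icc_variational_hasFDerivAt_flow (hU : IsOpen U)
    (hLip : LipschitzOnWith β X U) (hDX : ∀ y ∈ U, HasFDerivAt X (DX y) y)
    (hDXcont : ContinuousOn DX U) (hU₀ : IsOpen U₀)
    (hmem : ∀ t ∈ Ioo (-α) α, ∀ x ∈ U₀, 𝔽 t x ∈ U) (h0 : ∀ x ∈ U₀, 𝔽 0 x = x)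
    (hflow : ∀ x ∈ U₀, ∀ t ∈ Ioo (-α) α, HasDerivAt (fun s => 𝔽 s x) (X (𝔽 t x)) t)
    {x : E} (hx : x ∈ U₀) {c : ℝ} (hc0 : 0 ≤ c) (hcα : c < α) :
    ∃ W : ℝ → E →L[ℝ] E, ∀ t ∈ Icc (-c) c,
      HasDerivAt W ((DX (𝔽 t x)).comp (W t)) t ∧ HasFDerivAt (𝔽 t) (W t) x := by
  have hcα' : Icc (-c) c ⊆ Ioo (-α) α := Icc_subset_Ioo (neg_lt_neg hcα) hcα
  have hG : ContinuousOn (fun t => ContinuousLinearMap.compL ℝ E E E (DX (𝔽 t x))) (Icc (-c) c) :=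
    (ContinuousLinearMap.compL ℝ E E E).continuous.comp_continuousOn <|
      hDXcont.comp (HasDerivAt.continuousOn fun t ht => hflow x hx t (hcα' ht))
        fun t ht => hmem t (hcα' ht) x hx
  obtain ⟨W, hW0, hW⟩ := exists_forall_Icc_hasDerivAt_linear hG ⟨neg_nonpos.2 hc0, hc0⟩ 1
  refine ⟨W, fun t ht => ⟨hW t ht, ?_⟩⟩
  have hsub : ∀ {a b}, -c ≤ a → b ≤ c → Icc a b ⊆ Icc (-c) c := Icc_subset_Icc
  rcases le_total 0 t with ht0 | ht0
  · have hts := hsub (neg_nonpos.2 hc0) ht.2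
    exact hasFDerivAt_flow_of_variational hU hLip hDX hDXcont ht0 (hU₀.mem_nhds hx)
      (fun y hy s hs => hmem s (hcα' (hts hs)) y hy) h0
      (fun y hy s hs => hflow y hy s (hcα' (hts hs))) hW0 fun s hs => hW s (hts hs)
  · have hts := hsub ht.1 hc0
    exact hasFDerivAt_flow_of_variational_of_nonpos hU hLip hDX hDXcont ht0
      (hU₀.mem_nhds hx) (fun y hy s hs => hmem s (hcα' (hts hs)) y hy) h0
      (fun y hy s hs => hflow y hy s (hcα' (hts hs))) hW0 fun s hs => hW s (hts hs)

end Flow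

theorem flow_variational_equation_general
    {E : Type*} [NormedAddCommGroup E] [NormedSpace ℝ E] [CompleteSpace E]
    {U : Set E} (hU : IsOpen U) (X : E → E)
    (β : NNReal) (hLip : LipschitzOnWith β X U)
    (DX : E → E →L[ℝ] E) (hDX : ∀ y ∈ U, HasFDerivAt X (DX y) y)
    (hDXcont : ContinuousOn DX U)
    (α : ℝ) (U₀ : Set E) (hU₀ : IsOpen U₀)
    (𝔽 : ℝ → E → E)
    (hmem : ∀ t ∈ Set.Ioo (-α) α, ∀ x ∈ U₀, 𝔽 t x ∈ U)
    (h0 : ∀ x ∈ U₀, 𝔽 0 x = x)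
    (hflow : ∀ x ∈ U₀, ∀ t ∈ Set.Ioo (-α) α, HasDerivAt (fun s => 𝔽 s x) (X (𝔽 t x)) t) :
    ∀ x ∈ U₀, ∃ A : ℝ → E →L[ℝ] E,
      (∀ t ∈ Set.Ioo (-α) α, HasFDerivAt (fun y => 𝔽 t y) (A t) x) ∧
      A 0 = ContinuousLinearMap.id ℝ E ∧
      (∀ t ∈ Set.Ioo (-α) α, HasDerivAt A ((DX (𝔽 t x)).comp (A t)) t) ∧
      (∀ B : ℝ → E →L[ℝ] E, B 0 = ContinuousLinearMap.id ℝ E →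
        (∀ t ∈ Set.Ioo (-α) α, HasDerivAt B ((DX (𝔽 t x)).comp (B t)) t) →
        ∀ t ∈ Set.Ioo (-α) α, B t = A t) := by
  intro x hx
  set A : ℝ → E →L[ℝ] E := fun t => fderiv ℝ (𝔽 t) x
  have hA : ∀ t ∈ Ioo (-α) α,
      HasFDerivAt (𝔽 t) (A t) x ∧ HasDerivAt A ((DX (𝔽 t x)).comp (A t)) t := by
    intro t ht
    obtain ⟨c, htc, hcα⟩ := exists_between (abs_lt.2 ⟨ht.1, ht.2⟩)
    obtain ⟨W, hW⟩ := exists_forall_Icc_variational_hasFDerivAt_flow hU hLip hDX hDXcont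
      hU₀ hmem h0 hflow hx ((abs_nonneg t).trans htc.le) hcα
    have htc' : t ∈ Ioo (-c) c := abs_lt.1 htc
    have hAW : A =ᶠ[𝓝 t] W := eventually_of_mem (Ioo_mem_nhds htc'.1 htc'.2)
      fun s hs => (hW s (Ioo_subset_Icc_self hs)).2.fderiv
    rw [hAW.eq_of_nhds]
    exact ⟨(hW t (Ioo_subset_Icc_self htc')).2,
      hAW.hasDerivAt_iff.2 (hW t (Ioo_subset_Icc_self htc')).1⟩
  have hA0 : A 0 = ContinuousLinearMap.id ℝ E :=
    (eventuallyEq_of_mem (hU₀.mem_nhds hx) h0).fderiv_eq.trans (fderiv_id (𝕜 := ℝ))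
  refine ⟨A, fun t ht => (hA t ht).1, hA0, fun t ht => (hA t ht).2, fun B hB0 hB t ht => ?_⟩
  have hβ : ∀ s ∈ Ioo (-α) α, ‖DX (𝔽 s x)‖ ≤ β := fun s hs =>
    (hDX _ (hmem s hs x hx)).le_of_lipschitzOn (hU.mem_nhds (hmem s hs x hx)) hLip
  exact ODE_solution_unique_of_mem_Ioo (v := fun s M => (DX (𝔽 s x)).comp M) (s := fun _ => univ)
    (fun s hs => ((DX (𝔽 s x)).lipschitzWith_comp_left (hβ s hs)).lipschitzOnWith)
    (t₀ := 0) ⟨by linarith [ht.1, ht.2], by linarith [ht.1, ht.2]⟩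
    (fun s hs => ⟨hB s hs, mem_univ _⟩) (fun s hs => ⟨(hA s hs).2, mem_univ _⟩)
    (hB0.trans hA0.symm) ht

/-- Let `E` be a real Banach space, `U ⊆ E` open, `X : U → E` a `C¹`
Lipschitz vector field (with Fréchet derivative `DX`), and `𝔽 : (-α, α) × U₀ → U` a local flow
of `X`.  Then for each `x ∈ U₀` the partial Fréchet derivative `A t = D_x 𝔽(t, x) ∈ L(E,E)`
exists for all `t ∈ (-α, α)`, and `A` is the unique solution of the linear variational equation
`A'(t) = DX(𝔽(t,x)) ∘ A(t)`, `A 0 = id`, in the Banach space `L(E,E)`. -/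
theorem flow_variational_equation
    {E : Type*} [NormedAddCommGroup E] [NormedSpace ℝ E] [CompleteSpace E]
    {U : Set E} (hU : IsOpen U) (X : E → E)
    (hX : ContDiffOn ℝ 1 X U) (β : NNReal) (hLip : LipschitzOnWith β X U)
    (DX : E → E →L[ℝ] E) (hDX : ∀ y ∈ U, HasFDerivAt X (DX y) y)
    (hDXcont : ContinuousOn DX U)
    (α : ℝ) (hα : 0 < α) (U₀ : Set E) (hU₀ : IsOpen U₀) (hU₀U : U₀ ⊆ U)
    (𝔽 : ℝ → E → E)
    (hmem : ∀ t ∈ Set.Ioo (-α) α, ∀ x ∈ U₀, 𝔽 t x ∈ U)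
    (h0 : ∀ x ∈ U₀, 𝔽 0 x = x)
    (hflow : ∀ x ∈ U₀, ∀ t ∈ Set.Ioo (-α) α, HasDerivAt (fun s => 𝔽 s x) (X (𝔽 t x)) t) :
    ∀ x ∈ U₀, ∃ A : ℝ → E →L[ℝ] E,
      (∀ t ∈ Set.Ioo (-α) α, HasFDerivAt (fun y => 𝔽 t y) (A t) x) ∧
      A 0 = ContinuousLinearMap.id ℝ E ∧
      (∀ t ∈ Set.Ioo (-α) α, HasDerivAt A ((DX (𝔽 t x)).comp (A t)) t) ∧
      (∀ B : ℝ → E →L[ℝ] E, B 0 = ContinuousLinearMap.id ℝ E →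
        (∀ t ∈ Set.Ioo (-α) α, HasDerivAt B ((DX (𝔽 t x)).comp (B t)) t) →
        ∀ t ∈ Set.Ioo (-α) α, B t = A t) :=
  flow_variational_equation_general hU X β hLip DX hDX hDXcont α U₀ hU₀ 𝔽 hmem h0 hflow
end

section
/- Let E be a real Banach space, U ⊆ E an open set that is star-shaped with respect to 0, and ω : U → Λ²(E;ℝ) a C¹ map into the space of continuous alternating bilinear forms on E which is closed, i.e., for all x ∈ U and all u, v, w ∈ E: Dω(x)(u)(v,w) + Dω(x)(v)(w,u) + Dω(x)(w)(u,v) = 0. Define the 1-form α : U → E' by α(x)(v) := ∫₀¹ t·ω(tx)(x, v) dt. Then α(0) = 0, α is C¹, and dα = ω, i.e., for all x ∈ U and u, v ∈ E: Dα(x)(u)(v) − Dα(x)(v)(u) = ω(x)(u,v). -/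
/-!
Along the segment from `0` to `x`, `t ↦ t² ω(t x)(u, v)` has derivative
`2t ω(t x)(u, v) + t² Dω(t x)(x)(u, v)`. Differentiating `α` under the integral sign gives
`Dα(x)(u)(v) = ∫₀¹ (t ω(t x)(u, v) + t² Dω(t x)(u)(x, v)) dt`, and closedness of `ω` turns the
antisymmetrization of this integrand into exactly the derivative above, so `dα(x)(u, v)` is
`[t² ω(t x)(u, v)]₀¹ = ω(x)(u, v)`.
-/

open Set Filter Topology MeasureTheory Function

section ParametricIntegral

theorem IsCompact.exists_bound_eventually_of_continuousOn_prod {X Y G : Type*}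
    [TopologicalSpace X] [TopologicalSpace Y] [SeminormedAddCommGroup G]
    {f : X → Y → G} {s : Set X} {k : Set Y} {x₀ : X} (hk : IsCompact k)
    (hf : ContinuousOn (uncurry f) (s ×ˢ k)) (hx₀ : x₀ ∈ s) :
    ∃ C, ∀ᶠ x in 𝓝[s] x₀, ∀ t ∈ k, ‖f x t‖ ≤ C := by
  obtain ⟨M, hM⟩ := hk.exists_bound_of_continuousOn (hf.uncurry_left x₀ hx₀)
  obtain ⟨v, hv, hclose⟩ := hk.mem_uniformity_of_prod hf hx₀ (Metric.dist_mem_uniformity one_pos)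
  refine ⟨M + 1, eventually_of_mem hv fun x hx t ht => ?_⟩
  have hxt : dist (f x t) (f x₀ t) < 1 := hclose x hx t ht
  rw [dist_eq_norm] at hxt
  linarith [norm_le_norm_add_norm_sub' (f x t) (f x₀ t), hM t ht]

variable {X G : Type*} [TopologicalSpace X] [NormedAddCommGroup G] [NormedSpace ℝ G] {a b : ℝ}

theorem continuousOn_intervalIntegral_of_continuousOn_prod [FirstCountableTopology X]
    {f : X → ℝ → G} {s : Set X} (hf : ContinuousOn (uncurry f) (s ×ˢ uIcc a b)) :
    ContinuousOn (fun x => ∫ t in a..b, f x t) s := by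
  intro x₀ hx₀
  obtain ⟨C, hC⟩ := isCompact_uIcc.exists_bound_eventually_of_continuousOn_prod hf hx₀
  refine intervalIntegral.continuousWithinAt_of_dominated_interval (bound := fun _ => C) ?_ ?_
    intervalIntegrable_const ?_
  · filter_upwards [self_mem_nhdsWithin] with x hx
    exact ((hf.uncurry_left x hx).intervalIntegrable).def'.aestronglyMeasurable
  · filter_upwards [hC] with x hx
    exact Eventually.of_forall fun t ht => hx t (uIoc_subset_uIcc ht)
  · exact Eventually.of_forall fun t ht => hf.uncurry_right t (uIoc_subset_uIcc ht) x₀ hx₀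

theorem hasFDerivAt_intervalIntegral_of_continuousOn_prod {E : Type*} [NormedAddCommGroup E]
    [NormedSpace ℝ E] {F : E → ℝ → G} {F' : E → ℝ → E →L[ℝ] G} {s : Set E} {x₀ : E}
    (hs : IsOpen s) (hF : ContinuousOn (uncurry F) (s ×ˢ uIcc a b))
    (hF' : ContinuousOn (uncurry F') (s ×ˢ uIcc a b))
    (hderiv : ∀ x ∈ s, ∀ t ∈ uIcc a b, HasFDerivAt (F · t) (F' x t) x) (hx₀ : x₀ ∈ s) :
    HasFDerivAt (fun x => ∫ t in a..b, F x t) (∫ t in a..b, F' x₀ t) x₀ := by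
  obtain ⟨C, hC⟩ := isCompact_uIcc.exists_bound_eventually_of_continuousOn_prod hF' hx₀
  rw [hs.nhdsWithin_eq hx₀] at hC
  obtain ⟨n, hn, hnC⟩ := (hC.and (hs.mem_nhds hx₀)).exists_mem
  refine intervalIntegral.hasFDerivAt_integral_of_dominated_of_fderiv_le (bound := fun _ => C) hn
    ?_ (hF.uncurry_left x₀ hx₀).intervalIntegrable
    (hF'.uncurry_left x₀ hx₀).intervalIntegrable.def'.aestronglyMeasurable ?_
    intervalIntegrable_const ?_
  · filter_upwards [hs.mem_nhds hx₀] with x hx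
    exact ((hF.uncurry_left x hx).intervalIntegrable).def'.aestronglyMeasurable
  · exact Eventually.of_forall fun t ht x hx => (hnC x hx).1 t (uIoc_subset_uIcc ht)
  · exact Eventually.of_forall fun t ht x hx => hderiv x (hnC x hx).2 t (uIoc_subset_uIcc ht)

end ParametricIntegral

theorem contDiffOn_one_of_hasFDerivAt {𝕜 E F : Type*} [NontriviallyNormedField 𝕜]
    [NormedAddCommGroup E] [NormedSpace 𝕜 E] [NormedAddCommGroup F] [NormedSpace 𝕜 F]
    {f : E → F} {f' : E → E →L[𝕜] F} {s : Set E} (hs : IsOpen s)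
    (hf : ∀ x ∈ s, HasFDerivAt f (f' x) x) (hf' : ContinuousOn f' s) : ContDiffOn 𝕜 1 f s := by
  rw [show (1 : WithTop ℕ∞) = 0 + 1 from rfl,
    contDiffOn_succ_iff_hasFDerivWithinAt_of_uniqueDiffOn hs.uniqueDiffOn]
  exact ⟨by simp, f', contDiffOn_zero.2 hf', fun x hx => (hf x hx).hasFDerivWithinAt⟩

theorem fderiv_apply_apply_self_eq_zero {𝕜 E F G : Type*} [NontriviallyNormedField 𝕜]
    [NormedAddCommGroup E] [NormedSpace 𝕜 E] [NormedAddCommGroup F] [NormedSpace 𝕜 F]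
    [NormedAddCommGroup G] [NormedSpace 𝕜 G] {f : E → F →L[𝕜] F →L[𝕜] G} {x : E}
    (hf : DifferentiableAt 𝕜 f x) (halt : ∀ y v, f y v v = 0) (w : E) (v : F) :
    fderiv 𝕜 f x w v v = 0 := by
  let L : (F →L[𝕜] F →L[𝕜] G) →L[𝕜] G :=
    (ContinuousLinearMap.apply 𝕜 G v).comp (ContinuousLinearMap.apply 𝕜 (F →L[𝕜] G) v)
  have hLf : HasFDerivAt (L ∘ f) (L.comp (fderiv 𝕜 f x)) x :=
    L.hasFDerivAt.comp (𝕜 := 𝕜) (F := F →L[𝕜] F →L[𝕜] G) x hf.hasFDerivAt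
  have hconst : L ∘ f = fun _ => 0 := funext fun y => halt y v
  rw [hconst] at hLf
  exact congrArg (· w) (hLf.unique (hasFDerivAt_const 0 x))

section Poincare

variable {E : Type*} [NormedAddCommGroup E] [NormedSpace ℝ E]

-- Instance search fails to find these on iterated spaces of continuous linear maps over `ℝ`,
-- so they are given explicitly.
noncomputable instance : NormedAddCommGroup (E →L[ℝ] E →L[ℝ] E →L[ℝ] ℝ) :=
  @ContinuousLinearMap.toNormedAddCommGroup ℝ ℝ E (E →L[ℝ] E →L[ℝ] ℝ) _ _ _ _ _ _ (RingHom.id ℝ) _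

noncomputable instance : ContinuousAdd (E →L[ℝ] E →L[ℝ] ℝ) :=
  ContinuousLinearMap.topologicalAddGroup.toContinuousAdd

variable (ω : E → E →L[ℝ] E →L[ℝ] ℝ)

noncomputable def poincareIntegrand (x : E) (t : ℝ) : E →L[ℝ] ℝ := t • ω (t • x) x

noncomputable def poincareIntegrandFDeriv (x : E) (t : ℝ) : E →L[ℝ] E →L[ℝ] ℝ :=
  t • ω (t • x) + t ^ 2 • (fderiv ℝ ω (t • x)).flip x

variable {ω}

theorem hasFDerivAt_poincareIntegrand {x : E} {t : ℝ} (hω : DifferentiableAt ℝ ω (t • x)) :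
    HasFDerivAt (poincareIntegrand ω · t) (poincareIntegrandFDeriv ω x t) x := by
  have hcomp : HasFDerivAt (fun y : E => ω (t • y))
      ((fderiv ℝ ω (t • x)).comp (t • ContinuousLinearMap.id ℝ E)) x :=
    hω.hasFDerivAt.comp (𝕜 := ℝ) (G := E →L[ℝ] E →L[ℝ] ℝ) x
      (((hasFDerivAt_id x).const_smul t : HasFDerivAt (fun y : E => t • y) _ x))
  refine ((hcomp.clm_apply (hasFDerivAt_id x)).const_smul t).congr_fderiv ?_
  ext u v
  simp [poincareIntegrandFDeriv]
  ring

variable {U : Set E} {S : Set (E × ℝ)}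

theorem continuousOn_uncurry_poincareIntegrand (hω : ContinuousOn ω U)
    (hS : MapsTo (fun p : E × ℝ => p.2 • p.1) S U) :
    ContinuousOn (uncurry (poincareIntegrand ω)) S := by
  have hωS : ContinuousOn (fun p : E × ℝ => ω (p.2 • p.1)) S :=
    hω.comp (continuous_snd.smul continuous_fst).continuousOn hS
  exact continuous_snd.continuousOn.smul (hωS.clm_apply continuous_fst.continuousOn)

theorem continuousOn_uncurry_poincareIntegrandFDeriv (hω : ContinuousOn ω U)
    (hω' : ContinuousOn (fderiv ℝ ω) U) (hS : MapsTo (fun p : E × ℝ => p.2 • p.1) S U) :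
    ContinuousOn (uncurry (poincareIntegrandFDeriv ω)) S := by
  have hsmul : Continuous fun p : E × ℝ => p.2 • p.1 := continuous_snd.smul continuous_fst
  have hflip : ContinuousOn (fun p : E × ℝ => (fderiv ℝ ω (p.2 • p.1)).flip) S :=
    (ContinuousLinearMap.flipₗᵢ ℝ E E (E →L[ℝ] ℝ)).continuous.comp_continuousOn
      (hω'.comp hsmul.continuousOn hS)
  exact (continuous_snd.continuousOn.smul (hω.comp hsmul.continuousOn hS)).add
    ((continuous_snd.pow 2).continuousOn.smul (hflip.clm_apply continuous_fst.continuousOn))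

theorem hasDerivAt_sq_mul_apply_smul (halt : ∀ y v, ω y v v = 0) {x : E} {t : ℝ}
    (hω : DifferentiableAt ℝ ω (t • x))
    (hclosed : ∀ u v w, fderiv ℝ ω (t • x) u v w + fderiv ℝ ω (t • x) v w u
      + fderiv ℝ ω (t • x) w u v = 0) (u v : E) :
    HasDerivAt (fun s : ℝ => s ^ 2 * ω (s • x) u v)
      (poincareIntegrandFDeriv ω x t u v - poincareIntegrandFDeriv ω x t v u) t := by
  set D := fderiv ℝ ω (t • x)
  have hskew : ω (t • x) v u = -ω (t • x) u v :=
    ((LinearMap.IsAlt.neg (B := (ω (t • x)).toLinearMap₁₂) (halt _)) u v).symm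
  have hDskew : ∀ w a b, D w b a = -D w a b := fun w a b =>
    ((LinearMap.IsAlt.neg (B := (D w).toLinearMap₁₂)
      (fderiv_apply_apply_self_eq_zero hω halt w)) a b).symm
  have hcyclic : D u x v - D v x u = D x u v := by
    linear_combination hclosed u x v - hDskew x u v - hDskew v x u
  have hline : HasDerivAt (fun s : ℝ => ω (s • x) u v) (D x u v) t := by
    have hsmul : HasDerivAt (fun s : ℝ => s • x) x t := by
      simpa using (hasDerivAt_id t).smul_const x
    have hω_line := hω.hasFDerivAt.comp_hasDerivAt (𝕜 := ℝ) (E := E →L[ℝ] E →L[ℝ] ℝ) t hsmul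
    exact ((ContinuousLinearMap.apply ℝ ℝ v).comp
      (ContinuousLinearMap.apply ℝ (E →L[ℝ] ℝ) u)).hasFDerivAt.comp_hasDerivAt t hω_line
  refine ((hasDerivAt_pow 2 t).mul hline).congr_deriv ?_
  simp [poincareIntegrandFDeriv, D, hskew]
  linear_combination (-t ^ 2) * hcyclic

end Poincare

open ContinuousLinearMap in
theorem poincare_lemma_two_form_general
    {E : Type*} [NormedAddCommGroup E] [NormedSpace ℝ E]
    {U : Set E} (hU : IsOpen U) (h0U : (0 : E) ∈ U)
    (hstar : ∀ x ∈ U, ∀ t ∈ Set.Icc (0 : ℝ) 1, t • x ∈ U)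
    (ω : E → E →L[ℝ] E →L[ℝ] ℝ)
    (hω_alt : ∀ x : E, ∀ v : E, ω x v v = 0)
    (hω : ContDiffOn ℝ 1 ω U)
    (hclosed : ∀ x ∈ U, ∀ u v w : E,
      fderiv ℝ ω x u v w + fderiv ℝ ω x v w u + fderiv ℝ ω x w u v = 0)
    (α : E → E →L[ℝ] ℝ)
    (hα_def : ∀ x ∈ U, α x = ∫ t in (0 : ℝ)..1, t • ((ω (t • x)) x)) :
    α 0 = 0 ∧ ContDiffOn ℝ 1 α U ∧
      ∀ x ∈ U, ∀ u v : E, fderiv ℝ α x u v - fderiv ℝ α x v u = ω x u v := by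
  have hmaps : MapsTo (fun p : E × ℝ => p.2 • p.1) (U ×ˢ uIcc 0 1) U := fun p hp =>
    hstar p.1 hp.1 p.2 (uIcc_of_le (zero_le_one' ℝ) ▸ hp.2)
  have hdiff : ∀ y ∈ U, DifferentiableAt ℝ ω y := fun y hy =>
    (hω.differentiableOn one_ne_zero).differentiableAt (hU.mem_nhds hy)
  have hF := continuousOn_uncurry_poincareIntegrand hω.continuousOn hmaps
  have hF' := continuousOn_uncurry_poincareIntegrandFDeriv hω.continuousOn
    (hω.continuousOn_fderiv_of_isOpen hU le_rfl) hmaps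
  have hα : ∀ x ∈ U, HasFDerivAt α (∫ t in (0 : ℝ)..1, poincareIntegrandFDeriv ω x t) x :=
    fun x hx => (hasFDerivAt_intervalIntegral_of_continuousOn_prod hU hF hF'
      (fun y hy t ht => hasFDerivAt_poincareIntegrand (hdiff _ (hmaps (mk_mem_prod hy ht)))) hx
      ).congr_of_eventuallyEq (eventually_of_mem (hU.mem_nhds hx) hα_def)
  refine ⟨by simp [hα_def 0 h0U], contDiffOn_one_of_hasFDerivAt hU hα
    (continuousOn_intervalIntegral_of_continuousOn_prod hF'), fun x hx u v => ?_⟩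
  have hseg : ∀ t ∈ uIcc (0 : ℝ) 1, t • x ∈ U := fun t ht => hmaps (mk_mem_prod hx ht)
  have hΦ := hF'.uncurry_left x hx
  let L : (E →L[ℝ] E →L[ℝ] ℝ) →L[ℝ] ℝ :=
    (apply ℝ ℝ v).comp (apply ℝ _ u) - (apply ℝ ℝ u).comp (apply ℝ _ v)
  calc fderiv ℝ α x u v - fderiv ℝ α x v u
      = ∫ t in (0 : ℝ)..1, L (poincareIntegrandFDeriv ω x t) := by
        rw [(hα x hx).fderiv]
        exact (intervalIntegral_comp_comm (𝕜 := ℝ) L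
          (hΦ.intervalIntegrable (E := E →L[ℝ] E →L[ℝ] ℝ) (μ := volume))).symm
    _ = (1 : ℝ) ^ 2 * ω ((1 : ℝ) • x) u v - (0 : ℝ) ^ 2 * ω ((0 : ℝ) • x) u v :=
        intervalIntegral.integral_eq_sub_of_hasDerivAt (fun t ht =>
          hasDerivAt_sq_mul_apply_smul hω_alt (hdiff _ (hseg t ht)) (hclosed _ (hseg t ht)) u v)
          (L.continuous.comp_continuousOn hΦ).intervalIntegrable
    _ = ω x u v := by simp

/-- **Poincaré lemma for 2-forms.** Let `E` be a real Banach space, `U ⊆ E` an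
open set star-shaped with respect to `0`, and `ω : U → Λ²(E;ℝ)` a `C¹` closed 2-form (the
cyclic sum of its Fréchet derivative vanishes).  Define the 1-form
`α(x)(v) = ∫₀¹ t · ω(t x)(x, v) dt`.  Then `α 0 = 0`, `α` is `C¹` on `U`, and `dα = ω`, i.e.
`Dα(x)(u)(v) - Dα(x)(v)(u) = ω(x)(u, v)` for all `x ∈ U` and `u, v ∈ E`. -/
theorem poincare_lemma_two_form
    {E : Type*} [NormedAddCommGroup E] [NormedSpace ℝ E] [CompleteSpace E]
    {U : Set E} (hU : IsOpen U) (h0U : (0 : E) ∈ U)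
    (hstar : ∀ x ∈ U, ∀ t ∈ Set.Icc (0 : ℝ) 1, t • x ∈ U)
    (ω : E → E →L[ℝ] E →L[ℝ] ℝ)
    (hω_alt : ∀ x : E, ∀ v : E, ω x v v = 0)
    (hω : ContDiffOn ℝ 1 ω U)
    (hclosed : ∀ x ∈ U, ∀ u v w : E,
      fderiv ℝ ω x u v w + fderiv ℝ ω x v w u + fderiv ℝ ω x w u v = 0)
    (α : E → E →L[ℝ] ℝ)
    (hα_def : ∀ x ∈ U, α x = ∫ t in (0 : ℝ)..1, t • ((ω (t • x)) x)) :
    α 0 = 0 ∧ ContDiffOn ℝ 1 α U ∧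
      ∀ x ∈ U, ∀ u v : E, fderiv ℝ α x u v - fderiv ℝ α x v u = ω x u v :=
  poincare_lemma_two_form_general hU h0U hstar ω hω_alt hω hclosed α hα_def
end

section
/- Let E be a real Banach space, U ⊆ E an open neighborhood of 0, ω : U → Λ²(E;ℝ) a smooth 2-form, ω₀ a constant 2-form, and ωᵗ(x) := (1−t)·ω₀ + t·ω(x) for t ∈ [0,1]. Let α : U → E' be a smooth 1-form with Dα(x)(u)(v) − Dα(x)(v)(u) = ω(x)(u,v) − ω₀(u,v) for all x, u, v (i.e., dα = ω − ω₀), and suppose each ωᵗ is closed. Let X : [0,1] × U → E be a smooth time-dependent vector field satisfying ωᵗ(x)(X(t,x), v) = −α(x)(v) for all t, x, v, and let 𝔽 : [0,1] × V → U (V ⊆ U an open neighborhood of 0) satisfy 𝔽(0,x) = x and ∂ₜ𝔽(t,x) = X(t, 𝔽(t,x)), with 𝔽 smooth. Then the pullback 𝔽ₜ*ωᵗ is constant in t; in particular, for all t ∈ [0,1], x ∈ V, and u, v ∈ E: ωᵗ(𝔽(t,x))(D_x𝔽(t,x)u, D_x𝔽(t,x)v) = ω₀(u,v). -/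
/-!
Write `ωᵗ = (1 - t) • ω₀ + t • ω` and `A s = D_x𝔽(s, x)`. Differentiating `A s` in time and using
the symmetry of the second derivative of `𝔽` gives the variational equation `∂ₛ A = DX ∘ A`, so
the time derivative of `ωˢ(𝔽(s, x))(A s u, A s v)` is `(ω - ω₀ + L_X ωˢ)(A s u, A s v)`, where
`L_X` is the Lie derivative along `X`. For the closed form `ωˢ`, Cartan's formula gives
`L_X ωˢ = d(ι_X ωˢ) = -dα = ω₀ - ω`, so this derivative vanishes and the pullback keeps its
value `ω₀(u, v)` at `s = 0`.
-/

open Set Filter Topology ContinuousLinearMap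

section Alternating

variable {𝕜 E F : Type*} [NontriviallyNormedField 𝕜] [NormedAddCommGroup E] [NormedSpace 𝕜 E]
  [NormedAddCommGroup F] [NormedSpace 𝕜 F]

theorem ContinuousLinearMap.apply_swap_eq_neg_of_apply_self_eq_zero {B : E →L[𝕜] E →L[𝕜] F}
    (hB : ∀ v, B v v = 0) (u v : E) : B u v = -B v u := by
  have h := hB (u + v)
  simp only [map_add, add_apply, hB u, hB v, zero_add, add_zero] at h
  exact eq_neg_of_add_eq_zero_right h

theorem fderiv_apply_self_eq_zero {ω : E → E →L[𝕜] E →L[𝕜] F} (hω : ∀ x v, ω x v v = 0)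
    (x w v : E) : fderiv 𝕜 ω x w v v = 0 := by
  by_cases hd : DifferentiableAt 𝕜 ω x
  · have h := (hd.hasFDerivAt.clm_apply (hasFDerivAt_const v x)).clm_apply (hasFDerivAt_const v x)
    simp only [hω] at h
    simpa using congr($(h.unique (hasFDerivAt_const 0 x)) w)
  · simp [fderiv_zero_of_not_differentiableAt hd]

end Alternating

/-- Cartan's formula `L_X Ω = d(ι_X Ω)` for a closed form `Ω`, at one point: `B = DΩ`, `Z = X`,
`L = DX` there, and `θ = -D(ι_X Ω)`. -/
theorem cartan_formula_of_closed {E : Type*} [NormedAddCommGroup E] [NormedSpace ℝ E]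
    {Ω θ : E →L[ℝ] E →L[ℝ] ℝ} {B : E →L[ℝ] E →L[ℝ] E →L[ℝ] ℝ} {L : E →L[ℝ] E} {Z : E}
    (hΩ : ∀ v, Ω v v = 0) (hB : ∀ w v, B w v v = 0)
    (hclosed : ∀ u v w, B u v w + B v w u + B w u v = 0)
    (hL : ∀ w c, Ω (L w) c + B w Z c = -θ w c) (a b : E) :
    B Z a b + Ω (L a) b + Ω a (L b) = -(θ a b - θ b a) := by
  have h₁ := Ω.apply_swap_eq_neg_of_apply_self_eq_zero hΩ a (L b)
  have h₂ := (B a).apply_swap_eq_neg_of_apply_self_eq_zero (hB a) b Z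
  linarith [hclosed Z a b, hL a b, hL b a]

theorem eq_of_continuousOn_Icc_of_hasDerivAt_zero {f : ℝ → ℝ} {a b : ℝ}
    (hcont : ContinuousOn f (Icc a b)) (hderiv : ∀ x ∈ Ioo a b, HasDerivAt f 0 x) :
    ∀ x ∈ Icc a b, f x = f a := by
  rintro x ⟨hax, hxb⟩
  rcases hax.eq_or_lt with rfl | hax
  · rfl
  obtain ⟨c, hc, hslope⟩ := exists_hasDerivAt_eq_slope f (fun _ => 0) hax
    (hcont.mono (Icc_subset_Icc_right hxb)) fun c hc => hderiv c ⟨hc.1, hc.2.trans_le hxb⟩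
  rw [eq_comm, div_eq_zero_iff, sub_eq_zero] at hslope
  exact hslope.resolve_right (sub_ne_zero.2 hax.ne')

theorem hasDerivAt_fderiv_slice_of_contDiffAt {𝕜 E F : Type*} [RCLike 𝕜] [NormedAddCommGroup E]
    [NormedSpace 𝕜 E] [NormedAddCommGroup F] [NormedSpace 𝕜 F] {f : 𝕜 → E → F} {φ : E → F}
    {φ' : E →L[𝕜] F} {t : 𝕜} {x : E}
    (hf : ContDiffAt 𝕜 2 (fun p : 𝕜 × E => f p.1 p.2) (t, x))
    (hφ : ∀ᶠ x' in 𝓝 x, HasDerivAt (fun s => f s x') (φ x') t)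
    (hφ' : HasFDerivAt φ φ' x) :
    HasDerivAt (fun s => fderiv 𝕜 (f s) x) φ' t := by
  set G : 𝕜 × E → F := fun p => f p.1 p.2
  set G'' := fderiv 𝕜 (fderiv 𝕜 G) (t, x)
  have hG : ∀ᶠ p in 𝓝 (t, x), HasFDerivAt G (fderiv 𝕜 G p) p :=
    (hf.eventually (by simp)).mono fun p hp => (hp.differentiableAt (by simp)).hasFDerivAt
  have hG' : HasFDerivAt (fderiv 𝕜 G) G'' (t, x) :=
    ((hf.fderiv_right (m := 1) (by norm_num)).differentiableAt (by simp)).hasFDerivAt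
  have hsymm : ∀ w : E, G'' (1, 0) (0, w) = G'' (0, w) (1, 0) :=
    fun w => hf.isSymmSndFDerivAt (by simp) _ _
  have hcurve : ∀ y : E, HasDerivAt (fun s : 𝕜 => (s, y)) ((1 : 𝕜), (0 : E)) t :=
    fun y => (hasDerivAt_id t).prodMk (hasDerivAt_const t y)
  have hslice_time : ∀ᶠ s in 𝓝 t, fderiv 𝕜 (f s) x = (fderiv 𝕜 G (s, x)).comp (inr 𝕜 𝕜 E) :=
    ((hcurve x).continuousAt.tendsto.eventually hG).mono fun s hs =>
      (hs.comp x (hasFDerivAt_prodMk_right s x)).fderiv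
  have hslice_space : φ =ᶠ[𝓝 x] fun x' => apply 𝕜 F ((1 : 𝕜), (0 : E)) (fderiv 𝕜 G (t, x')) :=
    (((hasFDerivAt_prodMk_right (𝕜 := 𝕜) t x).continuousAt.tendsto.eventually hG).and hφ).mono
      fun x' ⟨hGx', hφx'⟩ => hφx'.unique (HasFDerivAt.comp_hasDerivAt (l := G) t hGx' (hcurve x'))
  have hφ'_eq : φ' = (apply 𝕜 F ((1 : 𝕜), (0 : E))).comp (G''.comp (inr 𝕜 𝕜 E)) :=
    hφ'.unique (((apply 𝕜 F _).hasFDerivAt.comp x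
      (hG'.comp x (hasFDerivAt_prodMk_right t x))).congr_of_eventuallyEq hslice_space)
  have htime : HasDerivAt (fun s => (fderiv 𝕜 G (s, x)).comp (inr 𝕜 𝕜 E))
      ((G'' (1, 0)).comp (inr 𝕜 𝕜 E)) t :=
    ((compL 𝕜 E (𝕜 × E) F).flip (inr 𝕜 𝕜 E)).hasFDerivAt.comp_hasDerivAt t
      (hG'.comp_hasDerivAt t (hcurve x))
  refine (htime.congr_of_eventuallyEq hslice_time).congr_deriv ?_
  ext w
  simp [hφ'_eq, hsymm]

theorem ContDiffOn.continuousOn_fderiv_slice {𝕜 E F : Type*} [NontriviallyNormedField 𝕜]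
    [NormedAddCommGroup E] [NormedSpace 𝕜 E] [NormedAddCommGroup F] [NormedSpace 𝕜 F]
    {f : 𝕜 → E → F} {I : Set 𝕜} {V : Set E} {x : E}
    (hf : ContDiffOn 𝕜 1 (fun p : 𝕜 × E => f p.1 p.2) (I ×ˢ V)) (hI : UniqueDiffOn 𝕜 I)
    (hV : IsOpen V) (hx : x ∈ V) :
    ContinuousOn (fun s => fderiv 𝕜 (f s) x) I := by
  have hslice : ∀ s ∈ I, fderiv 𝕜 (f s) x =
      (fderivWithin 𝕜 (fun p : 𝕜 × E => f p.1 p.2) (I ×ˢ V) (s, x)).comp (.inr 𝕜 𝕜 E) :=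
    fun s hs => ((((hf.differentiableOn one_ne_zero) (s, x) ⟨hs, hx⟩).hasFDerivWithinAt.comp x
      (hasFDerivAt_prodMk_right s x).hasFDerivWithinAt fun _ hy => ⟨hs, hy⟩).hasFDerivAt
        (hV.mem_nhds hx)).fderiv
  refine ContinuousOn.congr ?_ hslice
  exact ((hf.continuousOn_fderivWithin (hI.prod hV.uniqueDiffOn) le_rfl).comp
    (continuous_id.prodMk continuous_const).continuousOn fun s hs => ⟨hs, hx⟩).clm_comp
      continuousOn_const

theorem hasDerivAt_fderiv_flow {𝕜 E : Type*} [RCLike 𝕜] [NormedAddCommGroup E]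
    [NormedSpace 𝕜 E] {F : 𝕜 → E → E} {X : E → E} {t : 𝕜} {x : E}
    (hF : ContDiffAt 𝕜 2 (fun p : 𝕜 × E => F p.1 p.2) (t, x))
    (hflow : ∀ᶠ x' in 𝓝 x, HasDerivAt (fun s => F s x') (X (F t x')) t)
    (hX : DifferentiableAt 𝕜 X (F t x)) :
    HasDerivAt (fun s => fderiv 𝕜 (F s) x) ((fderiv 𝕜 X (F t x)).comp (fderiv 𝕜 (F t) x)) t :=
  have hFt : DifferentiableAt 𝕜 (F t) x :=
    (hF.differentiableAt (by simp)).comp x ((differentiableAt_const t).prodMk differentiableAt_id)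
  hasDerivAt_fderiv_slice_of_contDiffAt hF hflow (hX.hasFDerivAt.comp x hFt.hasFDerivAt)

section Interpolation

variable {E W : Type*} [NormedAddCommGroup E] [NormedSpace ℝ E] [NormedAddCommGroup W]
  [NormedSpace ℝ W]

theorem ContinuousOn.one_sub_smul_add_smul {f : ℝ → W} {I : Set ℝ} (w₀ : W)
    (hf : ContinuousOn f I) :
    ContinuousOn (fun s => (1 - s) • w₀ + s • f s) I :=
  ((continuousOn_const.sub continuousOn_id).smul continuousOn_const).add (continuousOn_id.smul hf)

theorem HasFDerivAt.one_sub_smul_add_smul {ω : E → W} {ω' : E →L[ℝ] W} (ω₀ : W) {y : E}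
    (t : ℝ) (hω : HasFDerivAt ω ω' y) :
    HasFDerivAt (fun y' => (1 - t) • ω₀ + t • ω y') (t • ω') y :=
  (hω.const_smul t).const_add _

theorem HasDerivAt.one_sub_smul_add_smul_comp {ω : E → W} {ω₀ : W} {c : ℝ → E} {c' : E} {t : ℝ}
    (hω : DifferentiableAt ℝ ω (c t)) (hc : HasDerivAt c c' t) :
    HasDerivAt (fun s => (1 - s) • ω₀ + s • ω (c s))
      (ω (c t) - ω₀ + t • fderiv ℝ ω (c t) c') t := by
  refine ((((hasDerivAt_const t 1).sub (hasDerivAt_id t)).smul_const ω₀).add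
    ((hasDerivAt_id t).smul (hω.hasFDerivAt.comp_hasDerivAt t hc))).congr_deriv ?_
  simp only [id, zero_sub, neg_smul, one_smul, Function.comp_apply]
  abel

end Interpolation

theorem moser_pullback_hasDerivAt_zero {E : Type*} [NormedAddCommGroup E] [NormedSpace ℝ E]
    {ω : E → E →L[ℝ] E →L[ℝ] ℝ} {ω₀ : E →L[ℝ] E →L[ℝ] ℝ} {α : E → E →L[ℝ] ℝ} {X : E → E}
    {𝔽 : ℝ → E → E} {t : ℝ} {x : E}
    (hω_alt : ∀ y v, ω y v v = 0) (hω₀_alt : ∀ v, ω₀ v v = 0)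
    (hω : DifferentiableAt ℝ ω (𝔽 t x))
    (hdα : ∀ u v, fderiv ℝ α (𝔽 t x) u v - fderiv ℝ α (𝔽 t x) v u = ω (𝔽 t x) u v - ω₀ u v)
    (hclosed : ∀ u v w,
      fderiv ℝ (fun y : E => (1 - t) • ω₀ + t • ω y) (𝔽 t x) u v w +
        fderiv ℝ (fun y : E => (1 - t) • ω₀ + t • ω y) (𝔽 t x) v w u +
        fderiv ℝ (fun y : E => (1 - t) • ω₀ + t • ω y) (𝔽 t x) w u v = 0)
    (hX : DifferentiableAt ℝ X (𝔽 t x))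
    (hXα : (fun y => ((1 - t) • ω₀ + t • ω y) (X y)) =ᶠ[𝓝 (𝔽 t x)] fun y => -α y)
    (h𝔽 : ContDiffAt ℝ 2 (fun p : ℝ × E => 𝔽 p.1 p.2) (t, x))
    (hflow : ∀ᶠ x' in 𝓝 x, HasDerivAt (fun s => 𝔽 s x') (X (𝔽 t x')) t) (u v : E) :
    HasDerivAt (fun s => ((1 - s) • ω₀ + s • ω (𝔽 s x)) (fderiv ℝ (𝔽 s) x u)
      (fderiv ℝ (𝔽 s) x v)) 0 t := by
  set y := 𝔽 t x
  set Ψ : E → E →L[ℝ] E →L[ℝ] ℝ := fun y' => (1 - t) • ω₀ + t • ω y'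
  set B := t • fderiv ℝ ω y
  set L := fderiv ℝ X y
  set A := fderiv ℝ (𝔽 t) x
  have hΨ : HasFDerivAt Ψ B y := hω.hasFDerivAt.one_sub_smul_add_smul ω₀ t
  rw [hΨ.fderiv] at hclosed
  have hΨ_alt : ∀ y' v, Ψ y' v v = 0 := by simp [Ψ, hω_alt, hω₀_alt]
  have hB_alt : ∀ w v, B w v v = 0 := by
    rw [← hΨ.fderiv]; exact fderiv_apply_self_eq_zero hΨ_alt y
  have hdα_eq : ∀ w c, Ψ y (L w) c + B w (X y) c = -fderiv ℝ α y w c := by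
    have h := ((hΨ.clm_apply hX.hasFDerivAt).congr_of_eventuallyEq hXα.symm).fderiv
    rw [fderiv_fun_neg] at h
    intro w c
    have hwc := congr($h w c)
    simp only [neg_apply, add_apply, comp_apply, flip_apply] at hwc
    linarith
  have hcartan := cartan_formula_of_closed (hΨ_alt y) hB_alt hclosed hdα_eq (A u) (A v)
  have hvar := hasDerivAt_fderiv_flow h𝔽 hflow hX
  -- With `W` left implicit, unifying the instance paths of `E →L[ℝ] E →L[ℝ] ℝ` times out.
  have hpath : HasDerivAt (fun s => (1 - s) • ω₀ + s • ω (𝔽 s x))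
      (ω y - ω₀ + t • fderiv ℝ ω y (X y)) t :=
    HasDerivAt.one_sub_smul_add_smul_comp (W := E →L[ℝ] E →L[ℝ] ℝ) hω hflow.self_of_nhds
  refine ((hpath.clm_apply
    (hvar.clm_apply (hasDerivAt_const t u))).clm_apply
      (hvar.clm_apply (hasDerivAt_const t v))).congr_deriv ?_
  simp only [Ψ, B] at hcartan
  simp only [smul_apply, smul_eq_mul, add_apply, neg_sub, sub_apply, comp_apply, map_zero,
    add_zero] at hcartan ⊢
  linarith [hdα (A u) (A v)]

theorem continuousOn_moser_pullback {E : Type*} [NormedAddCommGroup E] [NormedSpace ℝ E]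
    {ω : E → E →L[ℝ] E →L[ℝ] ℝ} {ω₀ : E →L[ℝ] E →L[ℝ] ℝ} {𝔽 : ℝ → E → E} {U V : Set E} {x : E}
    (hω : ContinuousOn ω U) (hmem : ∀ s ∈ Icc (0 : ℝ) 1, 𝔽 s x ∈ U)
    (h𝔽 : ContDiffOn ℝ 1 (fun p : ℝ × E => 𝔽 p.1 p.2) (Icc 0 1 ×ˢ V)) (hV : IsOpen V)
    (hx : x ∈ V) (u v : E) :
    ContinuousOn (fun s => ((1 - s) • ω₀ + s • ω (𝔽 s x)) (fderiv ℝ (𝔽 s) x u)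
      (fderiv ℝ (𝔽 s) x v)) (Icc 0 1) := by
  have h𝔽x : ContinuousOn (fun s => 𝔽 s x) (Icc 0 1) :=
    h𝔽.continuousOn.comp (continuous_id.prodMk continuous_const).continuousOn
      fun s hs => ⟨hs, hx⟩
  have hA := h𝔽.continuousOn_fderiv_slice (uniqueDiffOn_Icc one_pos) hV hx
  have hpath : ContinuousOn (fun s : ℝ => (1 - s) • ω₀ + s • ω (𝔽 s x)) (Icc 0 1) :=
    ContinuousOn.one_sub_smul_add_smul ω₀ (hω.comp h𝔽x hmem)
  exact (hpath.clm_apply (hA.clm_apply continuousOn_const)).clm_apply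
    (hA.clm_apply continuousOn_const)

theorem moser_isotopy_pullback_constant_general
    {E : Type*} [NormedAddCommGroup E] [NormedSpace ℝ E]
    {U : Set E} (hU : IsOpen U)
    (ω : E → E →L[ℝ] E →L[ℝ] ℝ) (ω₀ : E →L[ℝ] E →L[ℝ] ℝ)
    (hω_alt : ∀ x : E, ∀ v : E, ω x v v = 0) (hω₀_alt : ∀ v : E, ω₀ v v = 0)
    (hω : ContDiffOn ℝ (⊤ : ℕ∞) ω U)
    (α : E → E →L[ℝ] ℝ)
    (hdα : ∀ x ∈ U, ∀ u v : E,
      fderiv ℝ α x u v - fderiv ℝ α x v u = ω x u v - ω₀ u v)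
    (hclosed : ∀ t ∈ Set.Icc (0 : ℝ) 1, ∀ x ∈ U, ∀ u v w : E,
      fderiv ℝ (fun y : E => (1 - t) • ω₀ + t • ω y) x u v w +
        fderiv ℝ (fun y : E => (1 - t) • ω₀ + t • ω y) x v w u +
        fderiv ℝ (fun y : E => (1 - t) • ω₀ + t • ω y) x w u v = 0)
    (X : ℝ → E → E)
    (hX_smooth : ContDiffOn ℝ (⊤ : ℕ∞) (fun p : ℝ × E => X p.1 p.2)
      (Set.Icc (0 : ℝ) 1 ×ˢ U))
    (hX : ∀ t ∈ Set.Icc (0 : ℝ) 1, ∀ x ∈ U, ∀ v : E,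
      ((1 - t) • ω₀ + t • ω x) (X t x) v = -(α x v))
    (V : Set E) (hV : IsOpen V)
    (𝔽 : ℝ → E → E)
    (hmem : ∀ t ∈ Set.Icc (0 : ℝ) 1, ∀ x ∈ V, 𝔽 t x ∈ U)
    (h𝔽0 : ∀ x ∈ V, 𝔽 0 x = x)
    (h𝔽t : ∀ x ∈ V, ∀ t ∈ Set.Icc (0 : ℝ) 1,
      HasDerivAt (fun s => 𝔽 s x) (X t (𝔽 t x)) t)
    (h𝔽_smooth : ContDiffOn ℝ (⊤ : ℕ∞) (fun p : ℝ × E => 𝔽 p.1 p.2)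
      (Set.Icc (0 : ℝ) 1 ×ˢ V)) :
    ∀ t ∈ Set.Icc (0 : ℝ) 1, ∀ x ∈ V, ∀ u v : E,
      ((1 - t) • ω₀ + t • ω (𝔽 t x)) (fderiv ℝ (𝔽 t) x u) (fderiv ℝ (𝔽 t) x v) =
        ω₀ u v := by
  intro t ht x hx u v
  have hderiv : ∀ s ∈ Ioo (0 : ℝ) 1, HasDerivAt (fun s => ((1 - s) • ω₀ + s • ω (𝔽 s x))
      (fderiv ℝ (𝔽 s) x u) (fderiv ℝ (𝔽 s) x v)) 0 s := by
    intro s hs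
    have hsI := Ioo_subset_Icc_self hs
    have hyU := hmem s hsI x hx
    have hX_diff : DifferentiableAt ℝ (X s) (𝔽 s x) := by
      have hXc := hX_smooth.contDiffAt (prod_mem_nhds (Icc_mem_nhds hs.1 hs.2) (hU.mem_nhds hyU))
      exact (hXc.differentiableAt (by simp)).comp _
        ((differentiableAt_const s).prodMk differentiableAt_id)
    refine moser_pullback_hasDerivAt_zero hω_alt hω₀_alt
      ((hω.contDiffAt (hU.mem_nhds hyU)).differentiableAt (by simp)) (hdα _ hyU)
      (hclosed s hsI _ hyU) hX_diff ?_ ?_ ?_ u v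
    · exact eventually_of_mem (hU.mem_nhds hyU) fun y hy => ext (hX s hsI y hy)
    · exact (h𝔽_smooth.contDiffAt (prod_mem_nhds (Icc_mem_nhds hs.1 hs.2) (hV.mem_nhds hx))).of_le
        (WithTop.coe_le_coe.2 le_top)
    · exact eventually_of_mem (hV.mem_nhds hx) fun x' hx' => h𝔽t x' hx' s hsI
  have hcont := continuousOn_moser_pullback (ω₀ := ω₀) hω.continuousOn
    (fun s hs => hmem s hs x hx) (h𝔽_smooth.of_le (WithTop.coe_le_coe.2 le_top)) hV hx u v
  have hid : fderiv ℝ (𝔽 0) x = ContinuousLinearMap.id ℝ E := by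
    have h𝔽0_id : 𝔽 0 =ᶠ[𝓝 x] id := eventually_of_mem (hV.mem_nhds hx) h𝔽0
    rw [h𝔽0_id.fderiv_eq, fderiv_id]
  refine (eq_of_continuousOn_Icc_of_hasDerivAt_zero hcont hderiv t ht).trans ?_
  simp [hid]

/-- **Moser's trick computation.** Let `E` be a real Banach space, `U` an open
neighborhood of `0`, `ω` a smooth 2-form on `U`, `ω₀` a constant 2-form, and
`ωᵗ(x) = (1 - t) • ω₀ + t • ω x` for `t ∈ [0,1]`.  Let `α` be a smooth 1-form with
`dα = ω - ω₀`, suppose each `ωᵗ` is closed, let `X` be a smooth time-dependent vector field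
with `ωᵗ(x)(X(t,x), ·) = -α(x)`, and let `𝔽` be a smooth isotopy with `𝔽(0,x) = x` and
`∂ₜ𝔽(t,x) = X(t, 𝔽(t,x))`.  Then the pullback `𝔽ₜ* ωᵗ` is constant in `t`: for all
`t ∈ [0,1]`, `x ∈ V` and `u, v ∈ E`,
`ωᵗ(𝔽(t,x))(D_x𝔽(t,x) u, D_x𝔽(t,x) v) = ω₀(u, v)`. -/
theorem moser_isotopy_pullback_constant
    {E : Type*} [NormedAddCommGroup E] [NormedSpace ℝ E] [CompleteSpace E]
    {U : Set E} (hU : IsOpen U) (h0U : (0 : E) ∈ U)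
    (ω : E → E →L[ℝ] E →L[ℝ] ℝ) (ω₀ : E →L[ℝ] E →L[ℝ] ℝ)
    (hω_alt : ∀ x : E, ∀ v : E, ω x v v = 0) (hω₀_alt : ∀ v : E, ω₀ v v = 0)
    (hω : ContDiffOn ℝ (⊤ : ℕ∞) ω U)
    (α : E → E →L[ℝ] ℝ) (hα : ContDiffOn ℝ (⊤ : ℕ∞) α U)
    (hdα : ∀ x ∈ U, ∀ u v : E,
      fderiv ℝ α x u v - fderiv ℝ α x v u = ω x u v - ω₀ u v)
    (hclosed : ∀ t ∈ Set.Icc (0 : ℝ) 1, ∀ x ∈ U, ∀ u v w : E,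
      fderiv ℝ (fun y : E => (1 - t) • ω₀ + t • ω y) x u v w +
        fderiv ℝ (fun y : E => (1 - t) • ω₀ + t • ω y) x v w u +
        fderiv ℝ (fun y : E => (1 - t) • ω₀ + t • ω y) x w u v = 0)
    (X : ℝ → E → E)
    (hX_smooth : ContDiffOn ℝ (⊤ : ℕ∞) (fun p : ℝ × E => X p.1 p.2)
      (Set.Icc (0 : ℝ) 1 ×ˢ U))
    (hX : ∀ t ∈ Set.Icc (0 : ℝ) 1, ∀ x ∈ U, ∀ v : E,
      ((1 - t) • ω₀ + t • ω x) (X t x) v = -(α x v))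
    (V : Set E) (hV : IsOpen V) (h0V : (0 : E) ∈ V) (hVU : V ⊆ U)
    (𝔽 : ℝ → E → E)
    (hmem : ∀ t ∈ Set.Icc (0 : ℝ) 1, ∀ x ∈ V, 𝔽 t x ∈ U)
    (h𝔽0 : ∀ x ∈ V, 𝔽 0 x = x)
    (h𝔽t : ∀ x ∈ V, ∀ t ∈ Set.Icc (0 : ℝ) 1,
      HasDerivAt (fun s => 𝔽 s x) (X t (𝔽 t x)) t)
    (h𝔽_smooth : ContDiffOn ℝ (⊤ : ℕ∞) (fun p : ℝ × E => 𝔽 p.1 p.2)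
      (Set.Icc (0 : ℝ) 1 ×ˢ V))
    (h𝔽x_smooth : ∀ t ∈ Set.Icc (0 : ℝ) 1, ContDiffOn ℝ (⊤ : ℕ∞) (𝔽 t) V) :
    ∀ t ∈ Set.Icc (0 : ℝ) 1, ∀ x ∈ V, ∀ u v : E,
      ((1 - t) • ω₀ + t • ω (𝔽 t x)) (fderiv ℝ (𝔽 t) x u) (fderiv ℝ (𝔽 t) x v) =
        ω₀ u v :=
  moser_isotopy_pullback_constant_general hU ω ω₀ hω_alt hω₀_alt hω α hdα hclosed X hX_smooth hX V
    hV 𝔽 hmem h𝔽0 h𝔽t h𝔽_smooth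
end
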